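/- Adding a single edge to a graph can decrease the partial burning number by at most one: for any edge uv not in E(H) and any X ⊆ V(H), b(H, X) ≤ b(H + uv, X) + 1. -/

import Mathlib

/-!
Take a burning sequence of `H + uv` and let `k` be the first round after which `u` or `v`
burns, say `u`. Until then the edge `uv` has spread nothing, so the same sources burn the same
vertices in `H`. Now insert `v` as an extra source in round `k + 1` and delay all later sources
by one round: from then on both endpoints burn in `H`, so the edge `uv` is useless and `H`
stays at least as burned as `H + uv` was one round earlier.
-/

open SimpleGraph

/-- The set of vertices burned after `t` rounds of the burning process on `G`,
where `s i` is the source of fire chosen in round `i + 1`. -/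
def burnSet {V : Type*} (G : SimpleGraph V) (s : ℕ → V) : ℕ → Set V
  | 0 => ∅
  | t + 1 => burnSet G s t ∪ {w | ∃ u ∈ burnSet G s t, G.Adj u w} ∪ {s t}

/-- The partial burning number `b(G, S)`: the least number of rounds needed to
burn every vertex of `S`. -/
noncomputable def pburn {V : Type*} (G : SimpleGraph V) (S : Set V) : ℕ :=
  sInf {r | ∃ s : ℕ → V, S ⊆ burnSet G s r}

/-- The burning number `b(G)`. -/
noncomputable def burn {V : Type*} (G : SimpleGraph V) : ℕ :=
  pburn G Set.univ

/-- The ball of radius `t` around `v` in graph distance. -/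
def gball {V : Type*} (G : SimpleGraph V) (v : V) (t : ℕ) : Set V :=
  {w | G.dist v w ≤ t}

/-- The `m × n` Cartesian grid `P_m □ P_n`; the first coordinate is the height (row). -/
def gridGraph (m n : ℕ) : SimpleGraph (Fin m × Fin n) :=
  (pathGraph m) □ (pathGraph n)

section Burning

variable {V : Type*} {G H : SimpleGraph V} {s s' : ℕ → V} {u v : V}

lemma burnSet_subset_succ (G : SimpleGraph V) (s : ℕ → V) (t : ℕ) :
    burnSet G s t ⊆ burnSet G s (t + 1) :=
  fun _ hx => Or.inl (Or.inl hx)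

lemma burnSet_monotone (G : SimpleGraph V) (s : ℕ → V) : Monotone (burnSet G s) :=
  monotone_nat_of_le_succ (burnSet_subset_succ G s)

lemma source_mem_burnSet (G : SimpleGraph V) (s : ℕ → V) (t : ℕ) :
    s t ∈ burnSet G s (t + 1) :=
  Or.inr rfl

lemma burnSet_succ_subset_succ {t t' : ℕ} (hsub : burnSet G s t ⊆ burnSet H s' t')
    (hsrc : s t = s' t')
    (hspread : ∀ x ∈ burnSet G s t, ∀ w, G.Adj x w → H.Adj x w ∨ w ∈ burnSet H s' (t' + 1)) :
    burnSet G s (t + 1) ⊆ burnSet H s' (t' + 1) := by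
  rintro w ((hw | ⟨x, hx, hxw⟩) | rfl)
  · exact burnSet_subset_succ H s' t' (hsub hw)
  · rcases hspread x hx w hxw with hH | hw
    · exact Or.inl (Or.inr ⟨x, hsub hx, hH⟩)
    · exact hw
  · rw [hsrc]
    exact source_mem_burnSet H s' t'

lemma burnSet_subset_burnSet_of_le (hHG : H ≤ G) (s : ℕ → V) (t : ℕ) :
    burnSet H s t ⊆ burnSet G s t := by
  induction t with
  | zero => exact subset_rfl
  | succ t ih => exact burnSet_succ_subset_succ ih rfl fun x _ w hxw => Or.inl (hHG hxw)

lemma pburn_le_pburn_add (S : Set V) (c : ℕ) (hHG : H ≤ G)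
    (h : ∀ s r, ∃ s', burnSet G s r ⊆ burnSet H s' (r + c)) :
    pburn H S ≤ pburn G S + c := by
  rcases Set.eq_empty_or_nonempty {r | ∃ s : ℕ → V, S ⊆ burnSet G s r} with hG | hG
  · suffices hH : {r | ∃ s : ℕ → V, S ⊆ burnSet H s r} = ∅ by
      simp only [pburn, hH, Nat.sInf_empty, zero_le]
    refine Set.eq_empty_of_forall_notMem fun r ⟨s, hs⟩ => ?_
    exact hG.subset ⟨s, hs.trans (burnSet_subset_burnSet_of_le hHG s r)⟩
  · obtain ⟨s, hs⟩ := Nat.sInf_mem hG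
    obtain ⟨s', hs'⟩ := h s (pburn G S)
    exact Nat.sInf_le ⟨s', hs.trans hs'⟩

def insertAt (s : ℕ → V) (k : ℕ) (w : V) : ℕ → V :=
  fun i => if i < k then s i else if i = k then w else s (i - 1)

lemma insertAt_of_lt {k i : ℕ} (w : V) (hi : i < k) : insertAt s k w i = s i := if_pos hi

lemma insertAt_self (k : ℕ) (w : V) : insertAt s k w k = w := by simp [insertAt]

lemma insertAt_succ_of_le {k i : ℕ} (w : V) (hi : k ≤ i) : insertAt s k w (i + 1) = s i := by
  simp [insertAt, show ¬ i + 1 < k by omega, show i + 1 ≠ k by omega]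

variable (hG : ∀ x w, G.Adj x w → H.Adj x w ∨ s(x, w) = s(u, v))
include hG

lemma burnSet_subset_of_notMem {k : ℕ} (hs : ∀ i < k, s i = s' i)
    (hk : ∀ t < k, u ∉ burnSet G s t ∧ v ∉ burnSet G s t) :
    ∀ t ≤ k, burnSet G s t ⊆ burnSet H s' t := by
  intro t
  induction t with
  | zero => exact fun _ => subset_rfl
  | succ t ih =>
    intro ht
    refine burnSet_succ_subset_succ (ih (by omega)) (hs t ht) fun x hx w hxw => ?_
    refine (hG x w hxw).imp id fun he => absurd hx ?_
    have hxuv : x ∈ s(u, v) := he ▸ Sym2.mem_mk_left x w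
    rcases Sym2.mem_iff.mp hxuv with rfl | rfl
    exacts [(hk t ht).1, (hk t ht).2]

lemma burnSet_subset_succ_of_mem {k : ℕ} (hs : ∀ i, k ≤ i → s' (i + 1) = s i)
    (hk : burnSet G s k ⊆ burnSet H s' (k + 1))
    (hu : u ∈ burnSet H s' (k + 1)) (hv : v ∈ burnSet H s' (k + 1)) :
    ∀ t, k ≤ t → burnSet G s t ⊆ burnSet H s' (t + 1) := by
  refine Nat.le_induction hk fun t hkt ih => ?_
  refine burnSet_succ_subset_succ ih (hs t hkt).symm fun x _ w hxw => ?_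
  refine (hG x w hxw).imp id fun he => ?_
  have hwuv : w ∈ s(u, v) := he ▸ Sym2.mem_mk_right x w
  have hmono := burnSet_monotone H s' (show k + 1 ≤ t + 1 + 1 by omega)
  rcases Sym2.mem_iff.mp hwuv with rfl | rfl
  exacts [hmono hu, hmono hv]

lemma burnSet_subset_burnSet_insertAt {k : ℕ}
    (hk : ∀ t < k, u ∉ burnSet G s t ∧ v ∉ burnSet G s t) (hu : u ∈ burnSet G s k) (t : ℕ) :
    burnSet G s t ⊆ burnSet H (insertAt s k v) (t + 1) := by
  have hbefore := burnSet_subset_of_notMem hG (fun i hi => (insertAt_of_lt v hi).symm) hk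
  have hk' : burnSet G s k ⊆ burnSet H (insertAt s k v) (k + 1) :=
    (hbefore k le_rfl).trans (burnSet_subset_succ _ _ _)
  rcases le_total t k with htk | hkt
  · exact (hbefore t htk).trans (burnSet_subset_succ _ _ _)
  · refine burnSet_subset_succ_of_mem hG (fun i hi => insertAt_succ_of_le v hi) hk' (hk' hu) ?_
      t hkt
    simpa only [insertAt_self] using source_mem_burnSet H (insertAt s k v) k

lemma exists_burnSet_subset_succ (s : ℕ → V) (r : ℕ) :
    ∃ s', burnSet G s r ⊆ burnSet H s' (r + 1) := by
  classical
  by_cases hburn : ∃ k, u ∈ burnSet G s k ∨ v ∈ burnSet G s k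
  · have hk : ∀ t < Nat.find hburn, u ∉ burnSet G s t ∧ v ∉ burnSet G s t :=
      fun t ht => not_or.mp (Nat.find_min hburn ht)
    rcases Nat.find_spec hburn with hu | hv
    · exact ⟨_, burnSet_subset_burnSet_insertAt hG hk hu r⟩
    · have hG' : ∀ x w, G.Adj x w → H.Adj x w ∨ s(x, w) = s(v, u) := by
        simpa only [Sym2.eq_swap (a := u)] using hG
      exact ⟨_, burnSet_subset_burnSet_insertAt hG' (fun t ht => (hk t ht).symm) hv r⟩
  · push Not at hburn
    have hsub := burnSet_subset_of_notMem hG (fun _ _ => rfl) (fun t _ => hburn t) r le_rfl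
    exact ⟨s, hsub.trans (burnSet_subset_succ H s r)⟩

end Burning

theorem pburn_add_edge_general {V : Type*} (H : SimpleGraph V) (u v : V) (X : Set V) :
    pburn H X ≤ pburn (H ⊔ SimpleGraph.fromEdgeSet {s(u, v)}) X + 1 := by
  refine pburn_le_pburn_add X 1 le_sup_left (exists_burnSet_subset_succ (u := u) (v := v) ?_)
  rintro x w (hH | ⟨he, -⟩)
  exacts [Or.inl hH, Or.inr he]

/-- Adding a single edge can decrease the partial burning number by at most one:
`b(H, X) ≤ b(H + uv, X) + 1`. -/
theorem pburn_add_edge {V : Type*} [Fintype V] (H : SimpleGraph V) (u v : V)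
    (hne : u ≠ v) (hadj : ¬ H.Adj u v) (X : Set V) :
    pburn H X ≤ pburn (H ⊔ SimpleGraph.fromEdgeSet {s(u, v)}) X + 1 :=
  pburn_add_edge_general H u v X
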